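/- arXiv:2203.08720 — 2 statements merged into one kernel-verified Lean document; each statement's English description precedes it below -/
import Mathlib

section
/- For theories T over Δ, nominal variables x and z, and sentences ψ over Δ[x]: T ∪ {ψ} is satisfiable over the extended signature Δ[x] if and only if T ∪ {∃x. ∀z. @_z ψ} is satisfiable over Δ. -/
/-!
Hybrid (propositional-style) logic with rigid symbols: sentences over a set `Mo`
of binary modalities, a set `Pr` of flexible propositional symbols and a nominal
context `N`; binders over nominal variables are represented by extending the
nominal context with `Option`.  `rprop k p` is the rigidified atom `(@_k p)`.
-/

namespace HRigid

inductive HSen (Mo Pr : Type) : Type → Type 1 where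
  | prop {N : Type} : Pr → HSen Mo Pr N
  | rprop {N : Type} : N → Pr → HSen Mo Pr N
  | nom {N : Type} : N → HSen Mo Pr N
  | pos {N : Type} : Mo → HSen Mo Pr N → HSen Mo Pr N
  | neg {N : Type} : HSen Mo Pr N → HSen Mo Pr N
  | disj {N : Type} : HSen Mo Pr N → HSen Mo Pr N → HSen Mo Pr N
  | ret {N : Type} : N → HSen Mo Pr N → HSen Mo Pr N
  | allN {N : Type} : HSen Mo Pr (Option N) → HSen Mo Pr N
  | exN {N : Type} : HSen Mo Pr (Option N) → HSen Mo Pr N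

variable {Mo Pr : Type}

/-- Translation along a renaming of nominals. -/
def HSen.rename : {N N' : Type} → (N → N') → HSen Mo Pr N → HSen Mo Pr N'
  | _, _, _, .prop p => .prop p
  | _, _, h, .rprop k p => .rprop (h k) p
  | _, _, h, .nom k => .nom (h k)
  | _, _, h, .pos m γ => .pos m (γ.rename h)
  | _, _, h, .neg γ => .neg (γ.rename h)
  | _, _, h, .disj γ₁ γ₂ => .disj (γ₁.rename h) (γ₂.rename h)
  | _, _, h, .ret k γ => .ret (h k) (γ.rename h)
  | _, _, h, .allN γ => .allN (γ.rename (Option.map h))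
  | _, _, h, .exN γ => .exN (γ.rename (Option.map h))

/-- Kripke frames: worlds, accessibility relations and local truth of the
flexible propositional symbols. -/
structure HFrame (Mo Pr : Type) : Type 1 where
  Wo : Type
  ne : Nonempty Wo
  modI : Mo → Wo → Wo → Prop
  propI : Pr → Wo → Prop

/-- Local satisfaction `(W,M) ⊨^w γ` relative to a valuation `v` of the nominals. -/
def HFrame.sat (M : HFrame Mo Pr) :
    {N : Type} → HSen Mo Pr N → (N → M.Wo) → M.Wo → Prop
  | _, .prop p, _, w => M.propI p w
  | _, .rprop k p, v, _ => M.propI p (v k)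
  | _, .nom k, v, w => v k = w
  | _, .pos m γ, v, w => ∃ w', M.modI m w w' ∧ M.sat γ v w'
  | _, .neg γ, v, w => ¬ M.sat γ v w
  | _, .disj γ₁ γ₂, v, w => M.sat γ₁ v w ∨ M.sat γ₂ v w
  | _, .ret k γ, v, _ => M.sat γ v (v k)
  | _, .allN γ, v, w => ∀ w₀, M.sat γ (fun o => Option.elim o w₀ v) w
  | _, .exN γ, v, w => ∃ w₀, M.sat γ (fun o => Option.elim o w₀ v) w

/-- Global satisfaction. -/
def HFrame.gsat (M : HFrame Mo Pr) {N : Type} (γ : HSen Mo Pr N) (v : N → M.Wo) : Prop :=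
  ∀ w, M.sat γ v w



lemma sat_rename (M : HFrame Mo Pr) :
    ∀ {N N' : Type} (γ : HSen Mo Pr N) (h : N → N') (v : N' → M.Wo) (w : M.Wo),
      M.sat (γ.rename h) v w ↔ M.sat γ (v ∘ h) w
  | _, _, .prop p, h, v, w => Iff.rfl
  | _, _, .rprop k p, h, v, w => Iff.rfl
  | _, _, .nom k, h, v, w => Iff.rfl
  | _, _, .pos m γ, h, v, w => by
      simp only [HSen.rename, HFrame.sat]
      exact exists_congr fun w' => and_congr_right fun _ => sat_rename M γ h v w'
  | _, _, .neg γ, h, v, w => by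
      simp only [HSen.rename, HFrame.sat]
      exact not_congr (sat_rename M γ h v w)
  | _, _, .disj γ₁ γ₂, h, v, w => by
      simp only [HSen.rename, HFrame.sat]
      exact or_congr (sat_rename M γ₁ h v w) (sat_rename M γ₂ h v w)
  | _, _, .ret k γ, h, v, w => by
      simp only [HSen.rename, HFrame.sat]
      exact sat_rename M γ h v (v (h k))
  | _, _, .allN γ, h, v, w => by
      simp only [HSen.rename, HFrame.sat]
      refine forall_congr' fun w₀ => ?_
      rw [sat_rename M γ (Option.map h) _ w]
      have : ((fun o => Option.elim o w₀ v) ∘ Option.map h)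
          = fun o => Option.elim o w₀ (v ∘ h) := by
        funext o; cases o <;> rfl
      rw [this]
  | _, _, .exN γ, h, v, w => by
      simp only [HSen.rename, HFrame.sat]
      refine exists_congr fun w₀ => ?_
      rw [sat_rename M γ (Option.map h) _ w]
      have : ((fun o => Option.elim o w₀ v) ∘ Option.map h)
          = fun o => Option.elim o w₀ (v ∘ h) := by
        funext o; cases o <;> rfl
      rw [this]

/-- `T ∪ {ψ}` is satisfiable over `Δ[x]` iff `T ∪ {∃x.∀z.@_z ψ}` is satisfiable
over `Δ` (here `x` is a new nominal constant, rendered by the context `Option N`). -/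
theorem sat_over_extension_iff {N : Type}
    (T : Set (HSen Mo Pr N)) (ψ : HSen Mo Pr (Option N)) :
    (∃ (M : HFrame Mo Pr) (v : Option N → M.Wo),
        (∀ φ ∈ T, M.gsat (φ.rename some) v) ∧ M.gsat ψ v) ↔
      (∃ (M : HFrame Mo Pr) (v : N → M.Wo),
        (∀ φ ∈ T, M.gsat φ v) ∧
        M.gsat (HSen.exN (HSen.allN (HSen.ret none (ψ.rename some)))) v) := by
  constructor
  · rintro ⟨M, v, hT, hψ⟩
    refine ⟨M, v ∘ some, fun φ hφ w => ?_, fun w => ?_⟩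
    · exact (sat_rename M φ some v w).mp (hT φ hφ w)
    · refine ⟨v none, fun w₁ => ?_⟩
      simp only [HFrame.sat]
      refine (sat_rename M ψ some _ _).mpr ?_
      have : ((fun o => Option.elim o w₁ fun o => Option.elim o (v none) (v ∘ some)) ∘ some)
          = v := by funext o; cases o <;> rfl
      rw [this]; exact hψ _
  · rintro ⟨M, v, hT, hψ⟩
    obtain ⟨w⟩ := M.ne
    obtain ⟨w₀, h₀⟩ := hψ w
    refine ⟨M, fun o => Option.elim o w₀ v, fun φ hφ w₁ => ?_, fun w₁ => ?_⟩
    · rw [sat_rename M φ some _ w₁]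
      have : ((fun o => Option.elim o w₀ v) ∘ some) = v := by funext o; rfl
      rw [this]; exact hT φ hφ w₁
    · have := h₀ w₁
      simp only [HFrame.sat] at this
      have h2 := (sat_rename M ψ some _ _).mp this
      have he : ((fun o => Option.elim o w₁ fun o => Option.elim o w₀ v) ∘ some)
          = fun o => Option.elim o w₀ v := by funext o; cases o <;> rfl
      rw [he] at h2
      exact h2

end HRigid
end

section
/- The semantic forcing triple (P,≤,f) — where P is the set of all sets p of sentences over Δ[C] of cardinality less than α that are satisfiable in some Kripke structure whose Δ-reduct lies in a fixed class K, ≤ is inclusion, and f(p) = p ∩ basic sentences — is a forcing property. -/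
/-!
Forcing in hybrid-dynamic first-order logic with rigid symbols (Găină–Badia–Kowalski).
We work with an abstract fragment: `Nom` is the set of nominals, `Mo` the set of
(base) modalities, `Atom` the set of (extended) atomic sentences of the underlying
first-order layer (equations and relational atoms), and `Subst` the set of ground
substitutions used to interpret existential quantification.
-/

namespace HDFOLR

open Cardinal

/-- Structured actions over a set `Mo` of base modalities. -/
inductive Act (Mo : Type) : Type where
  | base : Mo → Act Mo
  | comp : Act Mo → Act Mo → Act Mo
  | union : Act Mo → Act Mo → Act Mo
  | star : Act Mo → Act Mo

/-- `a.pow n` is the `(n+1)`-fold sequential composition `a ⨟ ⋯ ⨟ a`. -/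
def Act.pow {Mo : Type} (a : Act Mo) : ℕ → Act Mo
  | 0 => a
  | n + 1 => Act.comp a (a.pow n)

/-- Sentences of (a fragment of) hybrid-dynamic first-order logic with rigid symbols:
atoms, nominal sentences, possibility over structured actions, negation, finite
disjunction, retrieve `@_k`, and existential quantification (rendered by its
ground instances, i.e. substitutions `θ : X → ∅`). -/
inductive Sen (Nom Mo Atom Subst : Type) : Type where
  | atom : Atom → Sen Nom Mo Atom Subst
  | nom : Nom → Sen Nom Mo Atom Subst
  | pos : Act Mo → Sen Nom Mo Atom Subst → Sen Nom Mo Atom Subst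
  | neg : Sen Nom Mo Atom Subst → Sen Nom Mo Atom Subst
  | disj : (n : ℕ) → (Fin n → Sen Nom Mo Atom Subst) → Sen Nom Mo Atom Subst
  | ret : Nom → Sen Nom Mo Atom Subst → Sen Nom Mo Atom Subst
  | ex : (Subst → Sen Nom Mo Atom Subst) → Sen Nom Mo Atom Subst

variable {Nom Mo Atom Subst : Type}

/-- Extended atomic sentences: atoms, nominals, and nominal relations `⟨λ⟩k'`. -/
def Sen.ExtAtomic : Sen Nom Mo Atom Subst → Prop
  | .atom _ => True
  | .nom _ => True
  | .pos (.base _) (.nom _) => True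
  | _ => False

/-- Basic sentences: extended atomic sentences with retrieve applied at most once. -/
def Sen.Basic : Sen Nom Mo Atom Subst → Prop
  | .ret _ γ => γ.ExtAtomic
  | γ => γ.ExtAtomic

/-- `Reach f p k a k'`: the condition `p` forces `⟨a⟩k'` at `k`
(clauses (2)–(4) of the definition of the forcing relation, together with the
atomic clause for nominal relations). -/
inductive Reach {P : Type} (f : P → Set (Sen Nom Mo Atom Subst)) :
    P → Nom → Act Mo → Nom → Prop where
  | base {p k m k'} :
      Sen.ret k (Sen.pos (Act.base m) (Sen.nom k')) ∈ f p → Reach f p k (Act.base m) k'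
  | comp {p k k' k'' a₁ a₂} :
      Reach f p k a₁ k' → Reach f p k' a₂ k'' → Reach f p k (Act.comp a₁ a₂) k''
  | unionL {p k k'' a₁ a₂} : Reach f p k a₁ k'' → Reach f p k (Act.union a₁ a₂) k''
  | unionR {p k k'' a₁ a₂} : Reach f p k a₂ k'' → Reach f p k (Act.union a₁ a₂) k''
  | star {p k k'' a} (n : ℕ) : Reach f p k (a.pow n) k'' → Reach f p k (Act.star a) k''

/-- The forcing relation `p ⊩^k γ` induced by `f : P → 𝒫(Sen_b(Δ))`. -/
def Forces {P : Type} [LE P] (f : P → Set (Sen Nom Mo Atom Subst)) :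
    Sen Nom Mo Atom Subst → P → Nom → Prop
  | .atom a, p, k => Sen.ret k (Sen.atom a) ∈ f p
  | .nom k', p, k => Sen.ret k (Sen.nom k') ∈ f p
  | .pos a (.nom k''), p, k => Reach f p k a k''
  | .pos a γ, p, k => ∃ k', Reach f p k a k' ∧ Forces f γ p k'
  | .neg γ, p, k => ∀ q, p ≤ q → ¬ Forces f γ q k
  | .disj _ g, p, k => ∃ i, Forces f (g i) p k
  | .ret k' γ, p, _ => Forces f γ p k'
  | .ex g, p, k => ∃ θ, Forces f (g θ) p k


/-- Kripke structures over the signature `(Nom, Mo, Atom)`: a nonempty set of worlds,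
interpretations of nominals as worlds, of modalities as accessibility relations,
and of the first-order atoms as local truth at each world. -/
structure KModel (Nom Mo Atom : Type) : Type 1 where
  Wo : Type
  ne : Nonempty Wo
  nomI : Nom → Wo
  modI : Mo → Wo → Wo → Prop
  atomI : Atom → Wo → Prop

variable {Nom Mo Atom Subst : Type}

/-- Accessibility relation interpreting structured actions. -/
def KModel.acc (M : KModel Nom Mo Atom) : Act Mo → M.Wo → M.Wo → Prop
  | .base m => M.modI m
  | .comp a b => Relation.Comp (M.acc a) (M.acc b)
  | .union a b => fun w w' => M.acc a w w' ∨ M.acc b w w'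
  | .star a => Relation.ReflTransGen (M.acc a)

/-- Local satisfaction `(W,M) ⊨^w γ`. -/
def KModel.locSat (M : KModel Nom Mo Atom) : Sen Nom Mo Atom Subst → M.Wo → Prop
  | .atom a, w => M.atomI a w
  | .nom k, w => M.nomI k = w
  | .pos a γ, w => ∃ w', M.acc a w w' ∧ M.locSat γ w'
  | .neg γ, w => ¬ M.locSat γ w
  | .disj _ g, w => ∃ i, M.locSat (g i) w
  | .ret k γ, _ => M.locSat γ (M.nomI k)
  | .ex g, w => ∃ θ, M.locSat (g θ) w

/-- Global satisfaction `(W,M) ⊨ γ`. -/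
def KModel.gSat (M : KModel Nom Mo Atom) (γ : Sen Nom Mo Atom Subst) : Prop :=
  ∀ w, M.locSat γ w

/-- `(W,M) ⊨ T` for a set of sentences. -/
def KModel.satSet (M : KModel Nom Mo Atom) (T : Set (Sen Nom Mo Atom Subst)) : Prop :=
  ∀ γ ∈ T, M.gSat γ

/-- Global semantic entailment `T ⊨ γ`. -/
def entails (T : Set (Sen Nom Mo Atom Subst)) (γ : Sen Nom Mo Atom Subst) : Prop :=
  ∀ M : KModel Nom Mo Atom, M.satSet T → M.gSat γ

/-- A forcing property `⟨P, ≤, f⟩` over the signature `(Nom, Mo, Atom, Subst)`. -/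
structure ForcingProperty (P Nom Mo Atom Subst : Type) [PartialOrder P] [OrderBot P] where
  f : P → Set (Sen Nom Mo Atom Subst)
  basic : ∀ p, ∀ γ ∈ f p, γ.Basic
  mono : ∀ ⦃p q : P⦄, p ≤ q → f p ⊆ f q
  decide : ∀ (p : P) (k : Nom) (γ : Sen Nom Mo Atom Subst), γ.ExtAtomic →
      entails (f p) (Sen.ret k γ) → ∃ q, p ≤ q ∧ Sen.ret k γ ∈ f q

universe u

variable {C : Type}

/-- Reduct of a Kripke structure over `Δ[C]` (extra nominal constants `C`) to `Δ`. -/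
def KModel.reduct (M : KModel (Nom ⊕ C) Mo Atom) : KModel Nom Mo Atom where
  Wo := M.Wo
  ne := M.ne
  nomI := fun k => M.nomI (Sum.inl k)
  modI := M.modI
  atomI := M.atomI

/-- Conditions of the semantic forcing property over `Δ[C]` relative to the class `K`
of Kripke structures over `Δ`: sets of `Δ[C]`-sentences of cardinality `< α`
satisfiable in a Kripke structure over `Δ[C]` whose `Δ`-reduct lies in `K`. -/
def SemP (K : Set (KModel Nom Mo Atom)) (α : Cardinal) :
    Set (Set (Sen (Nom ⊕ C) Mo Atom Subst)) :=
  {p | #↥p < α ∧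
    ∃ M : KModel (Nom ⊕ C) Mo Atom, (∀ γ ∈ p, M.gSat γ) ∧ M.reduct ∈ K}



/-- The semantic forcing triple `⟨P, ⊆, f⟩` with `f p = p ∩ Sen_b` is a forcing
property: `∅` is a least condition, `f` is monotone, and whenever
`f p ⊨ @_k γ` for an extended atomic `γ`, some condition `q ⊇ p` contains `@_k γ`. -/
theorem semP_is_forcing_property (K : Set (KModel Nom Mo Atom)) (α : Cardinal)
    (hα : Cardinal.aleph0 ≤ α) (hC : #C = α)
    (hpow : #(Sen Nom Mo Atom Subst) ≤ α) (hK : K.Nonempty) :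
    (∅ ∈ SemP (C := C) (Subst := Subst) K α) ∧
    (∀ p ∈ SemP (C := C) (Subst := Subst) K α, ∅ ⊆ p) ∧
    (∀ p ∈ SemP (C := C) (Subst := Subst) K α,
      ∀ q ∈ SemP (C := C) (Subst := Subst) K α, p ⊆ q →
        {γ ∈ p | γ.Basic} ⊆ {γ ∈ q | γ.Basic}) ∧
    (∀ p ∈ SemP (C := C) (Subst := Subst) K α,
      ∀ (k : Nom ⊕ C) (γ : Sen (Nom ⊕ C) Mo Atom Subst), γ.ExtAtomic →
        entails {δ ∈ p | δ.Basic} (Sen.ret k γ) →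
        ∃ q ∈ SemP (C := C) (Subst := Subst) K α,
          p ⊆ q ∧ Sen.ret k γ ∈ {δ ∈ q | δ.Basic}) := by
  refine ⟨?_, fun p _ => Set.empty_subset p, ?_, ?_⟩
  · obtain ⟨M, hM⟩ := hK
    refine ⟨by simpa using lt_of_lt_of_le Cardinal.aleph0_pos hα, ?_⟩
    obtain ⟨w⟩ := M.ne
    refine ⟨⟨M.Wo, M.ne, fun k => Sum.elim M.nomI (fun _ => w) k, M.modI, M.atomI⟩,
      fun γ hγ => absurd hγ (Set.notMem_empty γ), ?_⟩
    have : KModel.reduct (C := C)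
        ⟨M.Wo, M.ne, fun k => Sum.elim M.nomI (fun _ => w) k, M.modI, M.atomI⟩ = M := rfl
    rw [this]; exact hM
  · rintro p _ q _ hpq γ ⟨hγp, hγb⟩
    exact ⟨hpq hγp, hγb⟩
  · rintro p ⟨hcard, M, hMp, hMK⟩ k γ hγ hent
    have hMsat : M.gSat (Sen.ret k γ) := by
      apply hent
      rintro δ ⟨hδp, _⟩
      exact hMp δ hδp
    refine ⟨insert (Sen.ret k γ) p, ⟨?_, M, ?_, hMK⟩, ?_, ?_⟩
    · refine lt_of_le_of_lt (Cardinal.mk_insert_le) ?_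
      exact Cardinal.add_lt_of_lt hα hcard (lt_of_lt_of_le Cardinal.one_lt_aleph0 hα)
    · rintro δ (rfl | hδ)
      · exact hMsat
      · exact hMp δ hδ
    · exact Set.subset_insert _ _
    · exact ⟨Set.mem_insert _ _, by cases γ with
        | atom => trivial
        | nom => trivial
        | pos a δ => cases a with
          | base => cases δ <;> first | trivial | exact hγ
          | comp => exact hγ
          | union => exact hγ
          | star => exact hγ
        | neg => exact hγ
        | disj => exact hγ
        | ret => exact hγ
        | ex => exact hγ⟩

end HDFOLR
end
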